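/- arXiv:1910.09214 — 2 statements merged into one kernel-verified Lean document; each statement's English description precedes it below -/
import Mathlib

section
/- Let $A$ be a commutative ring with identity, $G$ a finite group acting on $A$ by ring automorphisms, and $A^G$ the subring of invariants. Let $\phi_1, \phi_2 : A \to K$ be ring homomorphisms to an algebraically closed field $K$ such that $\phi_1$ and $\phi_2$ agree on $A^G$. Then there exists $g \in G$ such that $\phi_2 = \phi_1 \circ g$. -/
open Polynomial

/-- Norm-polynomial trick: if `Φ₁, Φ₂ : R → K` agree on elements fixed by a
finite "action" `ρ`, then `Φ₂ x` is a root of the image of `∏ g, (X - ρ g x)`. -/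
private lemma prod_sub_eq_zero {R K : Type*} [CommRing R] [CommRing K]
    {G : Type*} [Group G] [Fintype G]
    (ρ : G → (R →+* R)) (hone : ∀ r, ρ 1 r = r)
    (hmul : ∀ g h r, ρ (g * h) r = ρ g (ρ h r))
    (Φ₁ Φ₂ : R →+* K)
    (hfix : ∀ r : R, (∀ g : G, ρ g r = r) → Φ₁ r = Φ₂ r) (x : R) :
    ∏ g : G, (Φ₂ x - Φ₁ (ρ g x)) = 0 := by
  set P : R[X] := ∏ g : G, (X - C (ρ g x)) with hP
  have hsmul : ∀ h : G, P.map (ρ h) = P := by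
    intro h
    rw [hP, Polynomial.map_prod]
    have h1 : ∀ g : G, (X - C (ρ g x)).map (ρ h) = X - C (ρ (h * g) x) := by
      intro g
      rw [Polynomial.map_sub, map_X, map_C, hmul]
    simp_rw [h1]
    exact Fintype.prod_bijective (fun g => h * g) (Group.mulLeft_bijective h) _ _ (fun g => rfl)
  have hcoeff : ∀ (n : ℕ) (h : G), ρ h (P.coeff n) = P.coeff n := by
    intro n h
    conv_rhs => rw [← hsmul h]
    rw [Polynomial.coeff_map]
  have hmap : P.map Φ₁ = P.map Φ₂ := by
    ext n
    rw [Polynomial.coeff_map, Polynomial.coeff_map]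
    exact hfix _ (fun g => hcoeff n g)
  have h1 : (P.map Φ₁).eval (Φ₂ x) = ∏ g : G, (Φ₂ x - Φ₁ (ρ g x)) := by
    rw [hP, Polynomial.map_prod, Polynomial.eval_prod]
    refine Finset.prod_congr rfl fun g _ => ?_
    rw [Polynomial.map_sub, map_X, map_C, eval_sub, eval_X, eval_C]
  have h2 : (P.map Φ₂).eval (Φ₂ x) = 0 := by
    rw [hP, Polynomial.map_prod, Polynomial.eval_prod]
    apply Finset.prod_eq_zero (Finset.mem_univ (1 : G))
    rw [Polynomial.map_sub, map_X, map_C, eval_sub, eval_X, eval_C, hone, sub_self]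
  rw [← h1, hmap, h2]

/-- Linear-combination version of the norm trick, via multivariate polynomials. -/
private lemma keyProd {A : Type*} [CommRing A] {G : Type*} [Group G] [Fintype G]
    [MulSemiringAction G A] {K : Type*} [CommRing K]
    (φ₁ φ₂ : A →+* K)
    (hfix : ∀ a : A, (∀ g : G, g • a = a) → φ₁ a = φ₂ a)
    {m : ℕ} (a : Fin m → A) (c : Fin m → K) :
    ∏ g : G, ((∑ i, φ₂ (a i) * c i) - (∑ i, φ₁ (g • a i) * c i)) = 0 := by
  classical
  set R := MvPolynomial (Fin m) A with hR
  let ρ : G → (R →+* R) := fun g => MvPolynomial.map (MulSemiringAction.toRingHom G A g)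
  have hone : ∀ r : R, ρ 1 r = r := by
    intro r
    have : MulSemiringAction.toRingHom G A 1 = RingHom.id A := by
      ext x; exact one_smul G x
    rw [show ρ 1 = MvPolynomial.map (MulSemiringAction.toRingHom G A 1) from rfl, this]
    exact MvPolynomial.map_id r
  have hmul : ∀ g h (r : R), ρ (g * h) r = ρ g (ρ h r) := by
    intro g h r
    have : MulSemiringAction.toRingHom G A (g * h)
        = (MulSemiringAction.toRingHom G A g).comp (MulSemiringAction.toRingHom G A h) := by
      ext x; exact mul_smul g h x
    rw [show ρ (g*h) = MvPolynomial.map (MulSemiringAction.toRingHom G A (g*h)) from rfl, this]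
    exact (MvPolynomial.map_map _ _ r).symm
  let Φ₁ : R →+* K := (MvPolynomial.eval c).comp (MvPolynomial.map φ₁)
  let Φ₂ : R →+* K := (MvPolynomial.eval c).comp (MvPolynomial.map φ₂)
  have hfix' : ∀ r : R, (∀ g : G, ρ g r = r) → Φ₁ r = Φ₂ r := by
    intro r hr
    have : MvPolynomial.map (φ₁ : A →+* K) r = MvPolynomial.map (φ₂ : A →+* K) r := by
      apply MvPolynomial.ext
      intro d
      rw [MvPolynomial.coeff_map, MvPolynomial.coeff_map]
      refine hfix _ (fun g => ?_)
      have := congrArg (MvPolynomial.coeff d) (hr g)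
      rwa [MvPolynomial.coeff_map] at this
    simp only [Φ₁, Φ₂, RingHom.comp_apply, this]
  have key := prod_sub_eq_zero ρ hone hmul Φ₁ Φ₂ hfix'
    (∑ i, MvPolynomial.C (a i) * MvPolynomial.X i)
  have hx2 : Φ₂ (∑ i, MvPolynomial.C (a i) * MvPolynomial.X i) = ∑ i, φ₂ (a i) * c i := by
    show (MvPolynomial.eval c) ((MvPolynomial.map (φ₂ : A →+* K)) _) = _
    rw [map_sum, map_sum]
    refine Finset.sum_congr rfl fun i _ => ?_
    rw [map_mul, map_mul, MvPolynomial.map_C, MvPolynomial.map_X,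
      MvPolynomial.eval_C, MvPolynomial.eval_X]
  have hx1 : ∀ g : G, Φ₁ (ρ g (∑ i, MvPolynomial.C (a i) * MvPolynomial.X i))
      = ∑ i, φ₁ (g • a i) * c i := by
    intro g
    have : ρ g (∑ i, MvPolynomial.C (a i) * MvPolynomial.X i)
        = ∑ i, MvPolynomial.C ((g • a i : A)) * MvPolynomial.X i := by
      show (MvPolynomial.map (MulSemiringAction.toRingHom G A g)) _ = _
      rw [map_sum]
      refine Finset.sum_congr rfl fun i _ => ?_
      rw [map_mul, MvPolynomial.map_C, MvPolynomial.map_X, MulSemiringAction.toRingHom_apply]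
    rw [this]
    show (MvPolynomial.eval c) ((MvPolynomial.map (φ₁ : A →+* K)) _) = _
    rw [map_sum, map_sum]
    refine Finset.sum_congr rfl fun i _ => ?_
    rw [map_mul, map_mul, MvPolynomial.map_C, MvPolynomial.map_X,
      MvPolynomial.eval_C, MvPolynomial.eval_X]
  rw [hx2] at key
  simp_rw [hx1] at key
  exact key

/-- SGA 3 V.4.1(iii): two homomorphisms `A → K` into an algebraically closed field
agreeing on the invariant subring `A^G` are related by an element of the finite
group `G` acting on `A`. -/
theorem exists_groupElement_relating_homs
    {A : Type*} [CommRing A] {G : Type*} [Group G] [Finite G]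
    [MulSemiringAction G A]
    {K : Type*} [Field K] [IsAlgClosed K]
    (φ₁ φ₂ : A →+* K)
    (hfix : ∀ a : A, (∀ g : G, g • a = a) → φ₁ a = φ₂ a) :
    ∃ g : G, ∀ a : A, φ₂ a = φ₁ (g • a) := by
  classical
  cases nonempty_fintype G
  by_contra hcon
  push_neg at hcon
  -- the distinct monoid homomorphisms `a ↦ φ₁ (g • a)`
  set ψ : G → (A →* K) :=
    fun g => (φ₁.comp (MulSemiringAction.toRingHom G A g)).toMonoidHom with hψ
  set χ₀ : A →* K := φ₂.toMonoidHom with hχ₀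
  set T : Finset (A →* K) := Finset.image ψ Finset.univ with hT
  have hχ₀T : χ₀ ∉ T := by
    intro hmem
    rw [hT, Finset.mem_image] at hmem
    obtain ⟨g, -, hg⟩ := hmem
    obtain ⟨a, ha⟩ := hcon g
    exact ha (congrFun (congrArg (fun f : A →* K => (f : A → K)) hg.symm) a)
  set n : ℕ := T.card with hn
  set e : Fin n ≃ {x // x ∈ T} := T.equivFin.symm with he
  set χ : Fin (n + 1) → (A →* K) := Fin.cons χ₀ (fun j => (e j : A →* K)) with hχ
  have hχinj : Function.Injective χ := by
    rw [hχ, Fin.cons_injective_iff]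
    constructor
    · rintro ⟨j, hj⟩
      exact hχ₀T (hj ▸ (e j).2)
    · intro i j hij
      exact e.injective (Subtype.ext hij)
  have hli : LinearIndependent K (fun i => (χ i : A → K)) :=
    (linearIndependent_monoidHom A K).comp χ hχinj
  set ev : A → (Fin (n + 1) → K) := fun a i => χ i a with hev
  set V : Submodule K (Fin (n + 1) → K) := Submodule.span K (Set.range ev) with hV
  set e₀ : Fin (n + 1) → K := Pi.single (0 : Fin (n + 1)) (1 : K) with he₀
  by_cases hmem : e₀ ∈ V
  · -- extract a finite combination and contradict `keyProd`
    obtain ⟨m, c, y, hy⟩ := Submodule.mem_span_set'.mp hmem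
    choose a ha using fun i => (y i).2
    have hcoord : ∀ k : Fin (n + 1), ∑ i, c i * χ k (a i) = e₀ k := by
      intro k
      have := congrFun hy k
      simp only [Finset.sum_apply, Pi.smul_apply, smul_eq_mul] at this
      rw [← this]
      refine Finset.sum_congr rfl fun i _ => ?_
      have : ((y i : Fin (n + 1) → K)) k = χ k (a i) := by rw [← ha i]
      rw [this]
    have h0 : ∑ i, φ₂ (a i) * c i = 1 := by
      have := hcoord 0
      rw [he₀] at this
      simp only [hχ, Fin.cons_zero, Pi.single_eq_same] at this
      rw [← this]
      exact Finset.sum_congr rfl fun i _ => mul_comm _ _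
    have hg : ∀ g : G, ∑ i, φ₁ (g • a i) * c i = 0 := by
      intro g
      have hmemT : ψ g ∈ T := by rw [hT]; exact Finset.mem_image_of_mem ψ (Finset.mem_univ g)
      set j : Fin n := e.symm ⟨ψ g, hmemT⟩ with hj
      have hej : (e j : A →* K) = ψ g := by rw [hj, Equiv.apply_symm_apply]
      have := hcoord j.succ
      rw [he₀] at this
      simp only [hχ, Fin.cons_succ, Pi.single_eq_of_ne (Fin.succ_ne_zero j)] at this
      rw [hej] at this
      rw [← this]
      exact Finset.sum_congr rfl fun i _ => mul_comm _ _
    have := keyProd φ₁ φ₂ hfix a c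
    rw [h0] at this
    simp_rw [hg] at this
    simp at this
  · -- produce a vanishing nontrivial linear combination of distinct characters
    obtain ⟨f, hf0, hfbot⟩ := Submodule.exists_dual_map_eq_bot_of_notMem hmem inferInstance
    set c : Fin (n + 1) → K := fun i => f (Pi.single i 1) with hc
    have hfev : ∀ a : A, f (ev a) = ∑ i, χ i a * c i := by
      intro a
      conv_lhs => rw [← Finset.univ_sum_single (ev a)]
      rw [map_sum]
      refine Finset.sum_congr rfl fun i _ => ?_
      have hsingle : Pi.single i (ev a i) = (ev a i) • (Pi.single i (1 : K) : Fin (n + 1) → K) := by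
        funext k
        by_cases hk : k = i
        · subst hk; simp
        · simp [Pi.single_eq_of_ne hk]
      rw [hsingle, map_smul, smul_eq_mul]
    have hzero : ∀ a : A, f (ev a) = 0 := by
      intro a
      have : f (ev a) ∈ V.map f := Submodule.mem_map_of_mem (Submodule.subset_span ⟨a, rfl⟩)
      rw [hfbot] at this
      exact this
    have hcz : ∀ i, c i = 0 := by
      refine Fintype.linearIndependent_iff.mp hli c ?_
      funext a
      simp only [Finset.sum_apply, Pi.smul_apply, smul_eq_mul, Pi.zero_apply]
      rw [← hzero a, hfev a]
      exact Finset.sum_congr rfl fun i _ => mul_comm _ _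
    exact hf0 (hcz 0)
end

section
/- Let $f : X \to Y$ be a continuous map of spectral spaces which is spectral (preimages of quasi-compact opens are quasi-compact), generalizing (if $y$ generalizes $f(x)$ then there is a generalization $x'$ of $x$ with $f(x') = y$), and bijective. Then $f$ is a homeomorphism. -/
open Set TopologicalSpace

private lemma chain_finset_lb {α : Type} {c : Set (Set α)} (hc : IsChain (· ⊆ ·) c)
    (hne : c.Nonempty) :
    ∀ u : Finset (Set α), ↑u ⊆ c → ∃ z ∈ c, ∀ s ∈ u, z ⊆ s := by
  classical
  intro u
  induction u using Finset.induction_on with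
  | empty => exact fun _ => ⟨hne.choose, hne.choose_spec, by simp⟩
  | @insert a r ha ih =>
    intro hu
    obtain ⟨z, hz, hzall⟩ := ih (fun s hs => hu (Finset.mem_insert_of_mem hs))
    have haC : a ∈ c := hu (Finset.mem_insert_self a r)
    rcases hc.total haC hz with h | h
    · exact ⟨a, haC, fun s hs => by
        rcases Finset.mem_insert.1 hs with rfl | hs
        · exact subset_rfl
        · exact h.trans (hzall s hs)⟩
    · exact ⟨z, hz, fun s hs => by
        rcases Finset.mem_insert.1 hs with rfl | hs
        · exact h
        · exact hzall s hs⟩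

/-- In a quasi-sober space, a closed set meeting every member of a downward-directed
nonempty family of quasi-compact open sets meets their intersection. -/
private lemma closed_inter_directed_qcopen {α : Type} [TopologicalSpace α] [QuasiSober α]
    (Z : Set α) (hZ : IsClosed Z) (𝒱 : Set (Set α))
    (hV : ∀ V ∈ 𝒱, IsOpen V ∧ IsCompact V)
    (hdir : ∀ V₁ ∈ 𝒱, ∀ V₂ ∈ 𝒱, ∃ V₃ ∈ 𝒱, V₃ ⊆ V₁ ∩ V₂)
    (hne : 𝒱.Nonempty)
    (hmeet : ∀ V ∈ 𝒱, (Z ∩ V).Nonempty) :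
    (Z ∩ ⋂₀ 𝒱).Nonempty := by
  classical
  set 𝒞 : Set (Set α) := {C | IsClosed C ∧ C ⊆ Z ∧ ∀ V ∈ 𝒱, (C ∩ V).Nonempty} with h𝒞
  have hchainlb : ∀ c ⊆ 𝒞, IsChain (· ⊆ ·) c → c.Nonempty → ∃ lb ∈ 𝒞, ∀ s ∈ c, lb ⊆ s := by
    intro c hc hchain hcne
    refine ⟨⋂₀ c, ⟨isClosed_sInter fun s hs => (hc hs).1,
      (sInter_subset_of_mem hcne.choose_spec).trans (hc hcne.choose_spec).2.1, ?_⟩,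
      fun s hs => sInter_subset_of_mem hs⟩
    intro V hVmem
    have hVc := (hV V hVmem).2
    have : (V ∩ ⋂ s : c, (s : Set α)).Nonempty := by
      refine hVc.inter_iInter_nonempty _ (fun s => (hc s.2).1) (fun u => ?_)
      obtain ⟨z, hz, hzall⟩ := chain_finset_lb hchain hcne (u.image (fun s : c => (s : Set α)))
        (by intro s hs; obtain ⟨t, -, rfl⟩ := Finset.mem_image.1 hs; exact t.2)
      obtain ⟨x, hxz, hxV⟩ := (hc hz).2.2 V hVmem
      exact ⟨x, hxV, mem_iInter₂.2 fun s hs =>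
        hzall s (Finset.mem_image.2 ⟨s, hs, rfl⟩) hxz⟩
    obtain ⟨x, hxV, hx⟩ := this
    exact ⟨x, by rwa [sInter_eq_iInter], hxV⟩
  obtain ⟨C, -, ⟨hCcl, hCZ, hCmeet⟩, hCmin⟩ :=
    zorn_superset_nonempty 𝒞 hchainlb Z ⟨hZ, subset_rfl, hmeet⟩
  -- C is irreducible
  have hCne : C.Nonempty := ((hCmeet hne.choose hne.choose_spec).mono inter_subset_left)
  have hirr : IsIrreducible C := by
    refine ⟨hCne, fun u v hu hv hCu hCv => ?_⟩
    by_contra hcon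
    rw [not_nonempty_iff_eq_empty] at hcon
    have key : ∀ w : Set α, IsOpen w → (C ∩ w).Nonempty → ∃ V ∈ 𝒱, (C ∩ wᶜ) ∩ V = ∅ := by
      intro w hw hCw
      by_contra hk
      push_neg at hk
      have hmem' : C ∩ wᶜ ∈ 𝒞 := ⟨hCcl.inter (isClosed_compl_iff.2 hw),
        inter_subset_left.trans hCZ, fun V hVm => hk V hVm⟩
      obtain ⟨x, hxC, hxw⟩ := hCw
      exact (hCmin hmem' inter_subset_left hxC).2 hxw
    obtain ⟨V₁, hV₁, h₁⟩ := key u hu hCu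
    obtain ⟨V₂, hV₂, h₂⟩ := key v hv hCv
    obtain ⟨V₃, hV₃, h₃⟩ := hdir V₁ hV₁ V₂ hV₂
    obtain ⟨x, hxC, hxV₃⟩ := hCmeet V₃ hV₃
    have hxu : x ∈ u := by
      by_contra hxu
      exact absurd h₁ (nonempty_iff_ne_empty.1 ⟨x, ⟨hxC, hxu⟩, (h₃ hxV₃).1⟩)
    have hxv : x ∈ v := by
      by_contra hxv
      exact absurd h₂ (nonempty_iff_ne_empty.1 ⟨x, ⟨hxC, hxv⟩, (h₃ hxV₃).2⟩)
    have : x ∈ C ∩ (u ∩ v) := ⟨hxC, hxu, hxv⟩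
    rw [hcon] at this
    exact this
  obtain ⟨ξ, hξ⟩ := QuasiSober.sober hirr hCcl
  refine ⟨ξ, hCZ (hξ.mem), ?_⟩
  rw [mem_sInter]
  intro V hVm
  obtain ⟨x, hxC, hxV⟩ := hCmeet V hVm
  have : x ∈ closure ({ξ} : Set α) := hξ ▸ hxC
  obtain ⟨y, hy, hy'⟩ := mem_closure_iff.1 this V (hV V hVm).1 hxV
  rwa [mem_singleton_iff.1 hy'] at hy

/-- Stacks Project Tag 09XU: a continuous, spectral, generalizing bijection between
spectral spaces is a homeomorphism. -/
theorem spectral_generalizing_bijective_isHomeomorph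
    (X Y : Type) [TopologicalSpace X] [TopologicalSpace Y]
    [CompactSpace X] [QuasiSober X] [QuasiSeparatedSpace X]
    (hXbasis : TopologicalSpace.IsTopologicalBasis {U : Set X | IsOpen U ∧ IsCompact U})
    [CompactSpace Y] [QuasiSober Y] [QuasiSeparatedSpace Y]
    (hYbasis : TopologicalSpace.IsTopologicalBasis {U : Set Y | IsOpen U ∧ IsCompact U})
    (f : X → Y)
    (hspec : IsSpectralMap f)
    (hgen : ∀ (x : X) (y : Y), y ⤳ f x → ∃ x' : X, x' ⤳ x ∧ f x' = y)
    (hbij : Function.Bijective f) :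
    IsHomeomorph f := by
  refine ⟨hspec.continuous, ?_, hbij⟩
  -- suffices: f is open on basic opens
  refine hXbasis.isOpenMap_iff.2 ?_
  rintro U ⟨hUo, hUc⟩
  rw [isOpen_iff_forall_mem_open]
  rintro y ⟨x, hxU, rfl⟩
  by_contra hcon
  push_neg at hcon
  -- every qc open nbhd of f x meets the complement of f '' U
  set 𝒱 : Set (Set X) := {W | ∃ V : Set Y, IsOpen V ∧ IsCompact V ∧ f x ∈ V ∧ W = f ⁻¹' V}
    with h𝒱
  have hVprop : ∀ W ∈ 𝒱, IsOpen W ∧ IsCompact W := by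
    rintro W ⟨V, hVo, hVc, -, rfl⟩
    exact ⟨hspec.continuous.isOpen_preimage V hVo, hspec.isCompact_preimage_of_isOpen hVo hVc⟩
  have hVne : 𝒱.Nonempty := ⟨f ⁻¹' univ, univ, isOpen_univ, isCompact_univ, mem_univ _, rfl⟩
  have hVdir : ∀ W₁ ∈ 𝒱, ∀ W₂ ∈ 𝒱, ∃ W₃ ∈ 𝒱, W₃ ⊆ W₁ ∩ W₂ := by
    rintro W₁ ⟨V₁, hV₁o, hV₁c, hV₁x, rfl⟩ W₂ ⟨V₂, hV₂o, hV₂c, hV₂x, rfl⟩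
    exact ⟨f ⁻¹' (V₁ ∩ V₂), ⟨V₁ ∩ V₂, hV₁o.inter hV₂o,
      QuasiSeparatedSpace.inter_isCompact V₁ V₂ hV₁o hV₁c hV₂o hV₂c, ⟨hV₁x, hV₂x⟩, rfl⟩,
      subset_rfl⟩
  have hVmeet : ∀ W ∈ 𝒱, (Uᶜ ∩ W).Nonempty := by
    rintro W ⟨V, hVo, hVc, hVx, rfl⟩
    by_contra hk
    rw [not_nonempty_iff_eq_empty] at hk
    have hsub : f ⁻¹' V ⊆ U := by
      intro z hz
      by_contra hzU
      exact absurd hk (nonempty_iff_ne_empty.1 ⟨z, hzU, hz⟩)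
    have hVsub : V ⊆ f '' U := by
      intro v hv
      obtain ⟨x', rfl⟩ := hbij.2 v
      exact ⟨x', hsub hv, rfl⟩
    exact hcon V hVsub hVo hVx
  obtain ⟨x', hx'U, hx'int⟩ := closed_inter_directed_qcopen Uᶜ (isClosed_compl_iff.2 hUo)
    𝒱 hVprop hVdir hVne hVmeet
  -- f x' belongs to every qc open nbhd of f x, so f x' ⤳ f x
  have hspecial : (f x') ⤳ (f x) := by
    rw [specializes_iff_mem_closure, hYbasis.mem_closure_iff]
    rintro V ⟨hVo, hVc⟩ hxV
    exact ⟨f x', mem_sInter.1 hx'int _ ⟨V, hVo, hVc, hxV, rfl⟩, rfl⟩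
  obtain ⟨x'', hx'', hfx''⟩ := hgen x (f x') hspecial
  have hx's : x' ⤳ x := by rwa [hbij.1 hfx''] at hx''
  have : x ∈ closure ({x'} : Set X) := specializes_iff_mem_closure.1 hx's
  have hsub : closure ({x'} : Set X) ⊆ Uᶜ :=
    (isClosed_compl_iff.2 hUo).closure_subset_iff.2 (singleton_subset_iff.2 hx'U)
  exact (hsub this) hxU
end
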